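/- On k[Y_∞], the free k-vector space on planar binary trees, define a bilinear product * by 1 * T = T = T * 1 and, for trees T = λ(T_1,T_2) and S = λ(S_1,S_2), T * S = λ(T_1, T_2 * S) + λ(T * S_1, S_2). Then * is associative with two-sided unit the single-leaf tree 1 (the Loday–Ronco product). -/

import Mathlib

/-! The product splits as `x * y = x ≺ y + x ≻ y` with `λ(T₁,T₂) ≺ S = λ(T₁, T₂ * S)` and
`T ≻ λ(S₁,S₂) = λ(T * S₁, S₂)`. For trees `A = λ(A₁,A₂)`, `B = λ(B₁,B₂)`, `C = λ(C₁,C₂)`, expanding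
both `(A * B) * C` and `A * (B * C)` this way gives
`λ(A₁, A₂ * B * C) + λ(A * B₁, B₂ * C) + λ(A * B * C₁, C₂)` up to the bracketing of the triple
products, so induction on the total size of `A` and `C` identifies them. -/

inductive BTree : Type
  | leaf : BTree
  | node : BTree → BTree → BTree
  deriving DecidableEq

noncomputable section

open Finsupp

variable {K : Type*} [Field K]

/-- graft a linear combination on the left slot of a node. -/
def nodeL (x : BTree →₀ K) (b : BTree) : BTree →₀ K :=
  x.sum fun u c => Finsupp.single (BTree.node u b) c

/-- graft a linear combination on the right slot of a node. -/
def nodeR (a : BTree) (x : BTree →₀ K) : BTree →₀ K :=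
  x.sum fun u c => Finsupp.single (BTree.node a u) c

/-- the Loday-Ronco product on basis trees:
`1 * T = T = T * 1` and `λ(T₁,T₂) * λ(S₁,S₂) = λ(T₁, T₂*S) + λ(T*S₁, S₂)`. -/
def mulT : BTree → BTree → (BTree →₀ K)
  | .leaf, t => Finsupp.single t 1
  | .node a b, .leaf => Finsupp.single (BTree.node a b) 1
  | .node a b, .node c d =>
      nodeR a (mulT b (.node c d)) + nodeL (mulT (.node a b) c) d
  termination_by s t => sizeOf s + sizeOf t
  decreasing_by
    all_goals simp
    all_goals omega

/-- bilinear extension of the product to `k[Y_∞]`. -/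
def star (x y : BTree →₀ K) : BTree →₀ K :=
  x.sum fun s a => y.sum fun t b => (a * b) • mulT s t

@[simp] lemma nodeR_zero (a : BTree) : nodeR a (0 : BTree →₀ K) = 0 := mapDomain_zero

@[simp] lemma nodeR_add (a : BTree) (x y : BTree →₀ K) :
    nodeR a (x + y) = nodeR a x + nodeR a y := mapDomain_add

@[simp] lemma nodeR_smul (a : BTree) (c : K) (x : BTree →₀ K) :
    nodeR a (c • x) = c • nodeR a x := mapDomain_smul c x

@[simp] lemma nodeR_single (a u : BTree) (c : K) :
    nodeR a (single u c) = single (BTree.node a u) c := mapDomain_single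

@[simp] lemma nodeL_zero (b : BTree) : nodeL (0 : BTree →₀ K) b = 0 := mapDomain_zero

@[simp] lemma nodeL_add (x y : BTree →₀ K) (b : BTree) :
    nodeL (x + y) b = nodeL x b + nodeL y b := mapDomain_add

@[simp] lemma nodeL_smul (c : K) (x : BTree →₀ K) (b : BTree) :
    nodeL (c • x) b = c • nodeL x b := mapDomain_smul c x

@[simp] lemma nodeL_single (u b : BTree) (c : K) :
    nodeL (single u c) b = single (BTree.node u b) c := mapDomain_single

def bilinExt (f : BTree → BTree → (BTree →₀ K)) :
    (BTree →₀ K) →ₗ[K] (BTree →₀ K) →ₗ[K] (BTree →₀ K) :=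
  linearCombination K fun s => linearCombination K (f s)

@[simp] lemma bilinExt_single_single (f : BTree → BTree → (BTree →₀ K)) (s t : BTree) (a b : K) :
    bilinExt f (single s a) (single t b) = a • b • f s t := by
  simp [bilinExt]

lemma star_eq_bilinExt (x y : BTree →₀ K) : star x y = bilinExt mulT x y := by
  simp only [_root_.star, bilinExt, linearCombination_apply, LinearMap.finsupp_sum_apply,
    LinearMap.smul_apply, Finsupp.smul_sum, mul_smul]

lemma mulT_leaf_left (t : BTree) : mulT (K := K) .leaf t = single t 1 := by
  rw [mulT]

lemma mulT_leaf_right (t : BTree) : mulT (K := K) t .leaf = single t 1 := by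
  cases t <;> rw [mulT]

lemma mulT_node_node (a b c d : BTree) :
    mulT (K := K) (.node a b) (.node c d)
      = nodeR a (mulT b (.node c d)) + nodeL (mulT (.node a b) c) d := by
  rw [mulT]

/-- `precT` and `succT` are the dendriform halves `s ≺ t` and `s ≻ t` of the product. -/
def precT : BTree → BTree → (BTree →₀ K)
  | .leaf, _ => 0
  | .node a b, t => nodeR a (mulT b t)

def succT : BTree → BTree → (BTree →₀ K)
  | _, .leaf => 0
  | s, .node c d => nodeL (mulT s c) d

lemma mulT_eq_precT_add_succT {s t : BTree} (h : s ≠ .leaf ∨ t ≠ .leaf) :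
    mulT (K := K) s t = precT s t + succT s t := by
  match s, t, h with
  | .leaf, .leaf, h => simp at h
  | .leaf, .node c d, _ => simp [precT, succT, mulT_leaf_left]
  | .node a b, .leaf, _ => simp [precT, succT, mulT_leaf_right]
  | .node a b, .node c d, _ => rw [mulT_node_node, precT, succT]

def prec : (BTree →₀ K) →ₗ[K] (BTree →₀ K) →ₗ[K] (BTree →₀ K) := bilinExt precT

def succ : (BTree →₀ K) →ₗ[K] (BTree →₀ K) →ₗ[K] (BTree →₀ K) := bilinExt succT

def graft : (BTree →₀ K) →ₗ[K] (BTree →₀ K) →ₗ[K] (BTree →₀ K) :=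
  bilinExt fun s t => single (.node s t) 1

lemma graft_single_left (u : BTree) (r : K) (z : BTree →₀ K) :
    graft (single u r) z = r • nodeR u z := by
  induction z using Finsupp.induction_linear <;> simp_all [graft]

lemma graft_single_right (y : BTree →₀ K) (v : BTree) (r : K) :
    graft y (single v r) = r • nodeL y v := by
  induction y using Finsupp.induction_linear <;> simp_all [graft, mul_comm]

lemma prec_single_node (a b : BTree) (y : BTree →₀ K) :
    prec (single (.node a b) 1) y = nodeR a (star (single b 1) y) := by
  induction y using Finsupp.induction_linear <;> simp_all [prec, precT, star_eq_bilinExt]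

lemma prec_nodeR (a : BTree) (x : BTree →₀ K) (c : BTree) :
    prec (nodeR a x) (single c 1) = nodeR a (star x (single c 1)) := by
  induction x using Finsupp.induction_linear <;> simp_all [prec, precT, star_eq_bilinExt]

lemma prec_nodeL (y : BTree →₀ K) (b c : BTree) :
    prec (nodeL y b) (single c 1) = graft y (mulT b c) := by
  induction y using Finsupp.induction_linear <;>
    simp_all [prec, precT, graft_single_left]

lemma succ_nodeR (a b : BTree) (z : BTree →₀ K) :
    succ (single a 1) (nodeR b z) = graft (mulT a b) z := by
  induction z using Finsupp.induction_linear <;>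
    simp_all [succ, succT, graft_single_right]

lemma succ_nodeL (a : BTree) (w : BTree →₀ K) (c : BTree) :
    succ (single a 1) (nodeL w c) = nodeL (star (single a 1) w) c := by
  induction w using Finsupp.induction_linear <;> simp_all [succ, succT, star_eq_bilinExt]

lemma succ_single_node (x : BTree →₀ K) (c d : BTree) :
    succ x (single (.node c d) 1) = nodeL (star x (single c 1)) d := by
  induction x using Finsupp.induction_linear <;> simp_all [succ, succT, star_eq_bilinExt]

lemma star_single_eq_prec_add_succ (x : BTree →₀ K) {c : BTree} (hc : c ≠ .leaf) :
    star x (single c 1) = prec x (single c 1) + succ x (single c 1) := by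
  induction x using Finsupp.induction_linear with
  | zero => simp [star_eq_bilinExt]
  | add x y hx hy => simp_all [star_eq_bilinExt]; abel
  | single s a => simp [star_eq_bilinExt, prec, succ, mulT_eq_precT_add_succT (Or.inr hc)]

lemma single_star_eq_prec_add_succ {a : BTree} (ha : a ≠ .leaf) (y : BTree →₀ K) :
    star (single a 1) y = prec (single a 1) y + succ (single a 1) y := by
  induction y using Finsupp.induction_linear with
  | zero => simp [star_eq_bilinExt]
  | add x y hx hy => simp_all [star_eq_bilinExt]; abel
  | single t b => simp [star_eq_bilinExt, prec, succ, mulT_eq_precT_add_succT (Or.inl ha)]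

lemma star_single_single (s t : BTree) :
    star (K := K) (single s 1) (single t 1) = mulT s t := by
  simp [star_eq_bilinExt]

lemma star_leaf_left (x : BTree →₀ K) : star (single BTree.leaf 1) x = x := by
  induction x using Finsupp.induction_linear <;> simp_all [star_eq_bilinExt, mulT_leaf_left]

lemma star_leaf_right (x : BTree →₀ K) : star x (single BTree.leaf 1) = x := by
  induction x using Finsupp.induction_linear <;> simp_all [star_eq_bilinExt, mulT_leaf_right]

theorem star_mulT_single (a b c : BTree) :
    star (mulT a b) (single c 1) = star (K := K) (single a 1) (mulT b c) := by
  match a, b, c with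
  | .leaf, b, c => rw [mulT_leaf_left, star_single_single, star_leaf_left]
  | .node a₁ a₂, b, .leaf => rw [star_leaf_right, mulT_leaf_right, star_single_single]
  | .node a₁ a₂, .leaf, .node c₁ c₂ => rw [mulT_leaf_left, mulT_leaf_right]
  | .node a₁ a₂, .node b₁ b₂, .node c₁ c₂ =>
    have ih₁ : star (K := K) (mulT a₂ (.node b₁ b₂)) (single (.node c₁ c₂) 1) = _ :=
      star_mulT_single a₂ (.node b₁ b₂) (.node c₁ c₂)
    have ih₂ : star (K := K) (mulT (.node a₁ a₂) (.node b₁ b₂)) (single c₁ 1) = _ :=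
      star_mulT_single (.node a₁ a₂) (.node b₁ b₂) c₁
    calc star (K := K) (mulT (.node a₁ a₂) (.node b₁ b₂)) (single (.node c₁ c₂) 1)
        = nodeR a₁ (star (K := K) (mulT a₂ (.node b₁ b₂)) (single (.node c₁ c₂) 1))
          + graft (mulT (.node a₁ a₂) b₁) (mulT b₂ (.node c₁ c₂))
          + nodeL (star (K := K) (mulT (.node a₁ a₂) (.node b₁ b₂)) (single c₁ 1)) c₂ := by
          rw [star_single_eq_prec_add_succ _ (by simp), succ_single_node,
            mulT_node_node (K := K) a₁ a₂, map_add, LinearMap.add_apply, prec_nodeR, prec_nodeL]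
      _ = nodeR a₁ (star (K := K) (single a₂ 1) (mulT (.node b₁ b₂) (.node c₁ c₂)))
          + graft (mulT (.node a₁ a₂) b₁) (mulT b₂ (.node c₁ c₂))
          + nodeL (star (K := K) (single (.node a₁ a₂) 1) (mulT (.node b₁ b₂) c₁)) c₂ := by
          rw [ih₁, ih₂]
      _ = prec (single (.node a₁ a₂) 1) (mulT (.node b₁ b₂) (.node c₁ c₂))
          + succ (single (.node a₁ a₂) 1) (mulT (.node b₁ b₂) (.node c₁ c₂)) := by
          rw [prec_single_node, mulT_node_node b₁ b₂, map_add, succ_nodeR, succ_nodeL, add_assoc]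
      _ = star (K := K) (single (.node a₁ a₂) 1) (mulT (.node b₁ b₂) (.node c₁ c₂)) :=
          (single_star_eq_prec_add_succ (by simp) _).symm
termination_by sizeOf a + sizeOf c

theorem star_assoc (x y z : BTree →₀ K) : star (star x y) z = star x (star y z) := by
  induction x using Finsupp.induction_linear with
  | zero => simp [star_eq_bilinExt]
  | add x x' hx hx' => simp_all [star_eq_bilinExt]
  | single s a =>
    induction y using Finsupp.induction_linear with
    | zero => simp [star_eq_bilinExt]
    | add y y' hy hy' => simp_all [star_eq_bilinExt]
    | single t b =>
      induction z using Finsupp.induction_linear with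
      | zero => simp [star_eq_bilinExt]
      | add z z' hz hz' => simp_all [star_eq_bilinExt]
      | single u c =>
        have key := star_mulT_single (K := K) s t u
        rw [← smul_single_one s a, ← smul_single_one t b, ← smul_single_one u c]
        simp only [star_eq_bilinExt, map_smul, LinearMap.smul_apply, bilinExt_single_single,
          one_smul] at key ⊢
        rw [key]

theorem loday_ronco_product_associative_unital :
    (∀ T S : BTree,
        star (K := K) (Finsupp.single T 1) (Finsupp.single S 1) = mulT T S) ∧
    (∀ x : BTree →₀ K, star (Finsupp.single BTree.leaf 1) x = x) ∧
    (∀ x : BTree →₀ K, star x (Finsupp.single BTree.leaf 1) = x) ∧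
    (∀ x y z : BTree →₀ K, star (star x y) z = star x (star y z)) :=
  ⟨star_single_single, star_leaf_left, star_leaf_right, star_assoc⟩

end
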